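/- arXiv:1506.04731 — 4 statements merged into one kernel-verified Lean document; each statement's English description precedes it below -/
import Mathlib

section
/- Let 1/2 < H₁ < H₂ < 1 and K_{H₁,H₂}(t,s) = β_{H₂} s^{1/2 - H₂} ∫ₛᵗ (t-u)^{1/2 - H₁} u^{H₂ - H₁} (u-s)^{H₂ - 3/2} du for 0 < s < t ≤ T. Then 0 ≤ K_{H₁,H₂}(t,s) ≤ β_{H₂} B(3/2 - H₁, H₂ - 1/2) t^{H₂ - H₁} s^{1/2 - H₂} (t - s)^{H₂ - H₁}. -/
open MeasureTheory intervalIntegral Real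

/-!
On `[s, t]` we have `u ^ (H₂ - H₁) ≤ t ^ (H₂ - H₁)`, since `H₂ > H₁`. What remains is
`∫ₛᵗ (u - s)^(H₂ - 3/2) (t - u)^(1/2 - H₁) du`, which the affine substitution
`u = s + (t - s) x` turns into `(t - s)^(H₂ - H₁) B(H₂ - 1/2, 3/2 - H₁)`.
-/

theorem integral_rpow_mul_one_sub_rpow {a b : ℝ} (ha : 0 < a) (hb : 0 < b) :
    ∫ x in (0:ℝ)..1, x ^ (a - 1) * (1 - x) ^ (b - 1) = ProbabilityTheory.beta a b := by
  have hcast :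
      Complex.betaIntegral a b = ↑(∫ x in (0:ℝ)..1, x ^ (a - 1) * (1 - x) ^ (b - 1)) := by
    rw [Complex.betaIntegral, ← integral_ofReal]
    refine integral_congr fun x hx => ?_
    rw [Set.uIcc_of_le zero_le_one] at hx
    push_cast
    rw [Complex.ofReal_cpow hx.1, Complex.ofReal_cpow (sub_nonneg.2 hx.2)]
    push_cast; rfl
  rw [ProbabilityTheory.beta_eq_betaIntegralReal a b ha hb, hcast, Complex.ofReal_re]

theorem integral_sub_rpow_mul_sub_rpow {a b s t : ℝ} (ha : 0 < a) (hb : 0 < b) (hst : s < t) :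
    ∫ u in s..t, (u - s) ^ (a - 1) * (t - u) ^ (b - 1) =
      ProbabilityTheory.beta a b * (t - s) ^ (a + b - 1) := by
  have hts : 0 < t - s := sub_pos.2 hst
  have hsubst := smul_integral_comp_mul_add
    (fun u => (u - s) ^ (a - 1) * (t - u) ^ (b - 1)) (a := 0) (b := 1) (t - s) s
  simp only [mul_zero, zero_add, mul_one, sub_add_cancel, smul_eq_mul] at hsubst
  rw [← hsubst, ← integral_rpow_mul_one_sub_rpow ha hb, ← intervalIntegral.integral_mul_const,
    ← intervalIntegral.integral_const_mul]
  refine integral_congr fun x hx => ?_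
  rw [Set.uIcc_of_le zero_le_one] at hx
  rw [show (t - s) * x + s - s = (t - s) * x by ring,
    show t - ((t - s) * x + s) = (t - s) * (1 - x) by ring,
    mul_rpow hts.le hx.1, mul_rpow hts.le (sub_nonneg.2 hx.2),
    show a + b - 1 = 1 + (a - 1) + (b - 1) by ring, rpow_add hts, rpow_add hts, rpow_one]
  ring

theorem intervalIntegrable_sub_rpow_mul_sub_rpow {a b s t : ℝ} (ha : 0 < a) (hb : 0 < b)
    (hst : s < t) :
    IntervalIntegrable (fun u => (u - s) ^ (a - 1) * (t - u) ^ (b - 1)) volume s t := by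
  refine intervalIntegrable_of_integral_ne_zero ?_
  rw [integral_sub_rpow_mul_sub_rpow ha hb hst]
  exact (mul_pos (ProbabilityTheory.beta_pos ha hb) (rpow_pos_of_pos (sub_pos.2 hst) _)).ne'

theorem integral_sub_rpow_mul_rpow_mul_sub_rpow_le {a b c s t : ℝ} (ha : 0 < a) (hb : 0 < b)
    (hc : 0 ≤ c) (hs : 0 ≤ s) (hst : s < t) :
    ∫ u in s..t, (t - u) ^ (b - 1) * u ^ c * (u - s) ^ (a - 1) ≤
      t ^ c * ProbabilityTheory.beta a b * (t - s) ^ (a + b - 1) := by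
  have hint := intervalIntegrable_sub_rpow_mul_sub_rpow ha hb hst
  have hcont : ContinuousOn (fun u : ℝ => u ^ c) (Set.uIcc s t) :=
    continuousOn_id.rpow_const fun _ _ => Or.inr hc
  rw [mul_assoc, ← integral_sub_rpow_mul_sub_rpow ha hb hst,
    ← intervalIntegral.integral_const_mul]
  refine integral_mono_on hst.le ?_ (hint.const_mul _) fun u hu => ?_
  · refine (hint.continuousOn_mul hcont).congr_ae (Filter.Eventually.of_forall fun u => ?_)
    ring
  · have hu0 : 0 ≤ u := hs.trans hu.1
    calc (t - u) ^ (b - 1) * u ^ c * (u - s) ^ (a - 1)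
        = u ^ c * ((u - s) ^ (a - 1) * (t - u) ^ (b - 1)) := by ring
      _ ≤ t ^ c * ((u - s) ^ (a - 1) * (t - u) ^ (b - 1)) := by
        gcongr
        · exact mul_nonneg (rpow_nonneg (sub_nonneg.2 hu.1) _) (rpow_nonneg (sub_nonneg.2 hu.2) _)
        · exact hu.2

theorem integral_sub_rpow_mul_rpow_mul_sub_rpow_nonneg {p q c s t : ℝ} (hs : 0 ≤ s)
    (hst : s ≤ t) :
    0 ≤ ∫ u in s..t, (t - u) ^ p * u ^ c * (u - s) ^ q :=
  integral_nonneg hst fun u hu => by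
    have := sub_nonneg.2 hu.2; have := hs.trans hu.1; have := sub_nonneg.2 hu.1; positivity

/-- Bounds for the kernel `K_{H₁,H₂}`:
`0 ≤ K_{H₁,H₂}(t,s) ≤ β B(3/2-H₁, H₂-1/2) t^{H₂-H₁} s^{1/2-H₂} (t-s)^{H₂-H₁}`. -/
theorem kernel_bounds (H₁ H₂ β s t : ℝ)
    (h1 : 1/2 < H₁) (h12 : H₁ < H₂) (h2 : H₂ < 1) (hβ : 0 < β)
    (hs : 0 < s) (hst : s < t) :
    0 ≤ β * s ^ (1/2 - H₂) *
        ∫ u in s..t, (t - u) ^ (1/2 - H₁) * u ^ (H₂ - H₁) * (u - s) ^ (H₂ - 3/2) ∧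
    β * s ^ (1/2 - H₂) *
        ∫ u in s..t, (t - u) ^ (1/2 - H₁) * u ^ (H₂ - H₁) * (u - s) ^ (H₂ - 3/2) ≤
      β * (Real.Gamma (3/2 - H₁) * Real.Gamma (H₂ - 1/2) / Real.Gamma (1 + H₂ - H₁)) *
        t ^ (H₂ - H₁) * s ^ (1/2 - H₂) * (t - s) ^ (H₂ - H₁) := by
  have hprefactor : 0 ≤ β * s ^ (1/2 - H₂) := by positivity
  refine ⟨mul_nonneg hprefactor
    (integral_sub_rpow_mul_rpow_mul_sub_rpow_nonneg hs.le hst.le), ?_⟩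
  have hbound := integral_sub_rpow_mul_rpow_mul_sub_rpow_le (a := H₂ - 1/2) (b := 3/2 - H₁)
    (c := H₂ - H₁) (by linarith) (by linarith) (by linarith) hs.le hst
  rw [show (3/2 - H₁) - 1 = 1/2 - H₁ by ring, show (H₂ - 1/2) - 1 = H₂ - 3/2 by ring,
    show H₂ - 1/2 + (3/2 - H₁) - 1 = H₂ - H₁ by ring, ProbabilityTheory.beta,
    show H₂ - 1/2 + (3/2 - H₁) = 1 + H₂ - H₁ by ring] at hbound
  calc β * s ^ (1/2 - H₂) *
        ∫ u in s..t, (t - u) ^ (1/2 - H₁) * u ^ (H₂ - H₁) * (u - s) ^ (H₂ - 3/2)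
      ≤ β * s ^ (1/2 - H₂) * (t ^ (H₂ - H₁) * (Gamma (H₂ - 1/2) * Gamma (3/2 - H₁) /
          Gamma (1 + H₂ - H₁)) * (t - s) ^ (H₂ - H₁)) := by gcongr
    _ = _ := by ring
end

section
/- Let 1/2 < H₁ < H₂ < 1 and let ∂_t K_{H₁,H₂}(t,s) denote the partial derivative in t of K_{H₁,H₂}(t,s) = β_{H₂} s^{1/2-H₂} ∫ₛᵗ (t-u)^{1/2-H₁} u^{H₂-H₁} (u-s)^{H₂-3/2} du. Then for 0 < s < t: ∂_t K_{H₁,H₂}(t,s) = (H₂ - H₁)[ K_{H₁,H₂}(t,s)/(t-s) + β_{H₂} s^{1/2-H₂} (t-s)^{-1} ∫ₛᵗ (t-r)^{1/2-H₁} r^{H₂-H₁-1} (r-s)^{H₂-1/2} dr ]. -/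
/-!
Substituting `u = s + (τ - s) v` turns `∫ₛ^τ (τ - u) ^ p u ^ m (u - s) ^ q du` into
`(τ - s) ^ (p + q + 1) ∫₀¹ (1 - v) ^ p v ^ q ((τ - s) v + s) ^ m dv`, which moves the
dependence on `τ` away from the singular endpoints into a power prefactor and the smooth weight
`((τ - s) v + s) ^ m`. The integral may then be differentiated under the integral sign, with a
Beta integrand as dominating function since `(τ - s) v + s ≥ s` and `m ≤ 1`; undoing the
substitution expresses the derivative through the same integral and one with exponents
`(p, q + 1, m - 1)`. For `K_{H₁,H₂}` both resulting coefficients `p + q + 1` and `m` equal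
`H₂ - H₁`.
-/

open MeasureTheory intervalIntegral Set
open scoped Interval

noncomputable def kernelIntegral (p q m s τ : ℝ) : ℝ :=
  ∫ u in s..τ, (τ - u) ^ p * u ^ m * (u - s) ^ q

lemma intervalIntegrable_one_sub_rpow_mul_rpow {p q : ℝ} (hp : -1 < p) (hq : -1 < q) :
    IntervalIntegrable (fun v => (1 - v) ^ p * v ^ q) volume 0 1 := by
  have hp' : IntervalIntegrable (fun v : ℝ => v ^ p) volume 0 (1 / 2) := intervalIntegrable_rpow' hp
  have hq' : IntervalIntegrable (fun v : ℝ => v ^ q) volume 0 (1 / 2) := intervalIntegrable_rpow' hq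
  refine IntervalIntegrable.trans (b := 1 / 2) ?_ ?_
  · have hc : ContinuousOn (fun v : ℝ => (1 - v) ^ p) [[0, 1 / 2]] :=
      ContinuousOn.rpow_const (by fun_prop) fun v hv => by
        rw [uIcc_of_le (by norm_num)] at hv
        exact Or.inl (sub_pos.2 (by linarith [hv.2])).ne'
    simpa only [mul_comm] using hq'.continuousOn_mul hc
  · have h1 : IntervalIntegrable (fun v : ℝ => (1 - v) ^ p) volume (1 / 2) 1 := by
      convert (hp'.comp_sub_left 1).symm using 1 <;> norm_num
    refine h1.mul_continuousOn (ContinuousOn.rpow_const continuousOn_id fun v hv => ?_)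
    rw [uIcc_of_le (by norm_num)] at hv
    exact Or.inl (lt_of_lt_of_le (by norm_num) hv.1).ne'

lemma kernelIntegral_eq_rpow_mul_integral_unitInterval (p q m : ℝ) {s τ : ℝ} (hsτ : s < τ) :
    kernelIntegral p q m s τ = (τ - s) ^ (p + q + 1) *
      ∫ v in (0 : ℝ)..1, (1 - v) ^ p * v ^ q * ((τ - s) * v + s) ^ m := by
  have hc : 0 < τ - s := sub_pos.2 hsτ
  have hsub := integral_comp_mul_add (a := 0) (b := 1)
    (fun u => (τ - u) ^ p * u ^ m * (u - s) ^ q) hc.ne' s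
  simp only [mul_zero, zero_add, mul_one, sub_add_cancel, smul_eq_mul] at hsub
  have hrescale : EqOn (fun v => (τ - ((τ - s) * v + s)) ^ p * ((τ - s) * v + s) ^ m *
        ((τ - s) * v + s - s) ^ q)
      (fun v => (τ - s) ^ p * (τ - s) ^ q * ((1 - v) ^ p * v ^ q * ((τ - s) * v + s) ^ m))
      [[0, 1]] := by
    intro v hv
    rw [uIcc_of_le zero_le_one] at hv
    dsimp only
    rw [show τ - ((τ - s) * v + s) = (τ - s) * (1 - v) by ring, add_sub_cancel_right,
      Real.mul_rpow hc.le (sub_nonneg.2 hv.2), Real.mul_rpow hc.le hv.1]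
    ring
  rw [kernelIntegral, ← mul_inv_cancel_left₀ hc.ne' (∫ u in s..τ, _), ← hsub,
    integral_congr hrescale, intervalIntegral.integral_const_mul, Real.rpow_add_one hc.ne',
    Real.rpow_add hc]
  ring

lemma norm_deriv_integrand_le {p q m s x v : ℝ} (hm : m ≤ 1) (hs : 0 < s) (hx : 0 < x)
    (hv : v ∈ Ioc (0 : ℝ) 1) :
    ‖(1 - v) ^ p * v ^ q * (m * (x * v + s) ^ (m - 1) * v)‖ ≤
      |m| * s ^ (m - 1) * ((1 - v) ^ p * v ^ q) := by
  have hw : 0 ≤ (1 - v) ^ p * v ^ q :=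
    mul_nonneg (Real.rpow_nonneg (sub_nonneg.2 hv.2) _) (Real.rpow_nonneg hv.1.le _)
  have hbase : s ≤ x * v + s := le_add_of_nonneg_left (mul_nonneg hx.le hv.1.le)
  have hpow : (x * v + s) ^ (m - 1) * v ≤ s ^ (m - 1) :=
    (mul_le_of_le_one_right (Real.rpow_nonneg (hs.le.trans hbase) _) hv.2).trans
      (Real.rpow_le_rpow_of_nonpos hs hbase (by linarith))
  rw [norm_mul, Real.norm_of_nonneg hw, norm_mul, norm_mul, Real.norm_eq_abs m,
    Real.norm_of_nonneg (Real.rpow_nonneg (hs.le.trans hbase) _), Real.norm_of_nonneg hv.1.le]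
  calc (1 - v) ^ p * v ^ q * (|m| * (x * v + s) ^ (m - 1) * v)
      = |m| * ((x * v + s) ^ (m - 1) * v) * ((1 - v) ^ p * v ^ q) := by ring
    _ ≤ |m| * s ^ (m - 1) * ((1 - v) ^ p * v ^ q) := by gcongr

lemma hasDerivAt_integral_unitInterval {p q m s c : ℝ} (hp : -1 < p) (hq : -1 < q) (hm : m ≤ 1)
    (hs : 0 < s) (hc : 0 < c) :
    HasDerivAt (fun x => ∫ v in (0 : ℝ)..1, (1 - v) ^ p * v ^ q * (x * v + s) ^ m)
      (m * ∫ v in (0 : ℝ)..1, (1 - v) ^ p * v ^ (q + 1) * (c * v + s) ^ (m - 1)) c := by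
  have hbeta := intervalIntegrable_one_sub_rpow_mul_rpow hp hq
  have hpos : ∀ x v, 0 < x → 0 ≤ v → 0 < x * v + s := fun x v hx hv =>
    add_pos_of_nonneg_of_pos (mul_nonneg hx.le hv) hs
  have hF := hasDerivAt_integral_of_dominated_loc_of_deriv_le (μ := volume) (a := 0) (b := 1)
    (F := fun x v => (1 - v) ^ p * v ^ q * (x * v + s) ^ m)
    (F' := fun x v => (1 - v) ^ p * v ^ q * (m * (x * v + s) ^ (m - 1) * v))
    (bound := fun v => |m| * s ^ (m - 1) * ((1 - v) ^ p * v ^ q))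
    (Ioi_mem_nhds hc)
    (.of_forall fun x => (by fun_prop : Measurable _).aestronglyMeasurable)
    (hbeta.mul_continuousOn (ContinuousOn.rpow_const (by fun_prop) fun v hv =>
      Or.inl (hpos c v hc (by rw [uIcc_of_le zero_le_one] at hv; exact hv.1)).ne'))
    ((by fun_prop : Measurable _).aestronglyMeasurable)
    (.of_forall fun v hv x hx => by
      rw [uIoc_of_le zero_le_one] at hv
      exact norm_deriv_integrand_le hm hs hx hv)
    (hbeta.const_mul _)
    (.of_forall fun v hv x hx => by
      rw [uIoc_of_le zero_le_one] at hv
      have hlin : HasDerivAt (fun y => y * v + s) v x := by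
        simpa using ((hasDerivAt_id x).mul_const v).add_const s
      exact ((Real.hasDerivAt_rpow_const (Or.inl (hpos x v hx hv.1.le).ne')).comp x hlin).const_mul
        _)
  refine hF.2.congr_deriv ?_
  rw [← intervalIntegral.integral_const_mul]
  refine integral_congr fun v hv => ?_
  rw [uIcc_of_le zero_le_one] at hv
  rw [Real.rpow_add_one' hv.1 (by linarith)]
  ring

lemma hasDerivAt_kernelIntegral {p q m s t : ℝ} (hp : -1 < p) (hq : -1 < q) (hm : m ≤ 1)
    (hs : 0 < s) (hst : s < t) :
    HasDerivAt (kernelIntegral p q m s)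
      (((p + q + 1) * kernelIntegral p q m s t + m * kernelIntegral p (q + 1) (m - 1) s t) /
        (t - s)) t := by
  have hc : 0 < t - s := sub_pos.2 hst
  have hshift : HasDerivAt (fun τ => τ - s) 1 t := (hasDerivAt_id' t).sub_const s
  have hprefactor := hshift.rpow_const (p := p + q + 1) (Or.inl hc.ne')
  have hunit := (hasDerivAt_integral_unitInterval hp hq hm hs hc).comp t hshift
  have hprod := (hprefactor.mul hunit).congr_of_eventuallyEq <| by
    filter_upwards [Ioi_mem_nhds hst] with τ hτ
    exact kernelIntegral_eq_rpow_mul_integral_unitInterval p q m hτ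
  refine hprod.congr_deriv ?_
  simp only [Function.comp_apply, one_mul, mul_one]
  rw [kernelIntegral_eq_rpow_mul_integral_unitInterval p q m hst,
    kernelIntegral_eq_rpow_mul_integral_unitInterval p (q + 1) (m - 1) hst,
    show p + (q + 1) + 1 = p + q + 1 + 1 by ring, add_sub_cancel_right]
  simp only [Real.rpow_add_one hc.ne']
  field_simp

theorem kernel_partial_deriv_general (H₁ H₂ β s t : ℝ)
    (h1 : 1/2 < H₁) (h12 : H₁ < H₂) (h2 : H₂ < 1)
    (hs : 0 < s) (hst : s < t)
    (K : ℝ → ℝ → ℝ)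
    (hK : ∀ t' s', K t' s' = β * s' ^ (1/2 - H₂) *
      ∫ u in s'..t', (t' - u) ^ (1/2 - H₁) * u ^ (H₂ - H₁) * (u - s') ^ (H₂ - 3/2)) :
    HasDerivAt (fun τ => K τ s)
      ((H₂ - H₁) * (K t s / (t - s) +
        β * s ^ (1/2 - H₂) * (t - s)⁻¹ *
          ∫ r in s..t, (t - r) ^ (1/2 - H₁) * r ^ (H₂ - H₁ - 1) * (r - s) ^ (H₂ - 1/2)))
      t := by
  have hK' : (fun τ => K τ s) =
      fun τ => β * s ^ (1/2 - H₂) * kernelIntegral (1/2 - H₁) (H₂ - 3/2) (H₂ - H₁) s τ :=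
    funext fun τ => hK τ s
  have hderiv := (hasDerivAt_kernelIntegral (p := 1/2 - H₁) (q := H₂ - 3/2) (m := H₂ - H₁)
    (by linarith) (by linarith) (by linarith) hs hst).const_mul (β * s ^ (1/2 - H₂))
  rw [hK']
  refine hderiv.congr_deriv ?_
  rw [hK t s, kernelIntegral, kernelIntegral, show H₂ - 3/2 + 1 = H₂ - 1/2 by ring,
    show 1/2 - H₁ + (H₂ - 3/2) + 1 = H₂ - H₁ by ring]
  field_simp

/-- Formula for the partial derivative in `t` of the kernel `K_{H₁,H₂}(t,s)`. -/
theorem kernel_partial_deriv (H₁ H₂ β s t : ℝ)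
    (h1 : 1/2 < H₁) (h12 : H₁ < H₂) (h2 : H₂ < 1) (hβ : 0 < β)
    (hs : 0 < s) (hst : s < t)
    (K : ℝ → ℝ → ℝ)
    (hK : ∀ t' s', K t' s' = β * s' ^ (1/2 - H₂) *
      ∫ u in s'..t', (t' - u) ^ (1/2 - H₁) * u ^ (H₂ - H₁) * (u - s') ^ (H₂ - 3/2)) :
    HasDerivAt (fun τ => K τ s)
      ((H₂ - H₁) * (K t s / (t - s) +
        β * s ^ (1/2 - H₂) * (t - s)⁻¹ *
          ∫ r in s..t, (t - r) ^ (1/2 - H₁) * r ^ (H₂ - H₁ - 1) * (r - s) ^ (H₂ - 1/2)))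
      t :=
  kernel_partial_deriv_general H₁ H₂ β s t h1 h12 h2 hs hst K hK
end

section
/- Let 1/2 < H₁ < H₂ < 1 with H₂ - H₁ > 1/4, and let k₁: (0,T)² → ℝ be a measurable function satisfying 0 ≤ k₁(s,u) ≤ C u^{H₁ - 1/2} s^{1/2 - H₁} (u - s)^{2H₂ - 2H₁ - 1} for s < u and 0 ≤ k₁(s,u) ≤ C s^{H₁ - 1/2} u^{1/2 - H₁} (s - u)^{2H₂ - 2H₁ - 1} for u < s, for some constant C > 0. Then ∫₀ᵀ ∫₀ᵀ k₁(s,u)² ds du ≤ C' T^{4H₂ - 4H₁} for some constant C' depending only on H₁, H₂, C; in particular k₁ ∈ L²([0,T]²). -/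
open MeasureTheory intervalIntegral Set
open scoped ENNReal

/-!
Squaring the pointwise bounds gives `k₁(s,u)² ≤ C² u^c s^a (u-s)^b` on the triangle `s < u`, where
`c = 2H₁ - 1`, `a = 1 - 2H₁` and `b = 4H₂ - 4H₁ - 2`, and the mirrored bound on `u < s`. The
diagonal is null, so the integral over the square is at most twice the integral of this kernel
over the triangle. For fixed `u`, splitting `(0, u)` at `u / 2` bounds `∫₀ᵘ s^a (u-s)^b ds` by a
multiple of `u^(a+b+1)`; this needs `a, b > -1`, and `b > -1` is exactly `H₂ - H₁ > 1/4`. As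
`c = -a`, what remains is `∫₀ᵀ u^(b+1) du`, a multiple of `T^(b+2) = T^(4H₂-4H₁)`.
-/

lemma lintegral_Ioo_rpow {r u : ℝ} (hr : -1 < r) (hu : 0 ≤ u) :
    ∫⁻ s in Ioo 0 u, ENNReal.ofReal (s ^ r) = ENNReal.ofReal (u ^ (r + 1) / (r + 1)) := by
  have hint : IntegrableOn (fun s : ℝ => s ^ r) (Ioc 0 u) :=
    (intervalIntegrable_iff_integrableOn_Ioc_of_le hu).mp (intervalIntegrable_rpow' hr)
  rw [setLIntegral_congr Ioo_ae_eq_Ioc, ← ofReal_integral_eq_lintegral_ofReal hint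
    ((ae_restrict_iff' measurableSet_Ioc).mpr (.of_forall fun s hs => Real.rpow_nonneg hs.1.le r)),
    ← intervalIntegral.integral_of_le hu, integral_rpow (.inl hr), Real.zero_rpow (by linarith),
    sub_zero]

lemma lintegral_Ioo_sub_rpow {r u : ℝ} (hr : -1 < r) (hu : 0 ≤ u) :
    ∫⁻ s in Ioo 0 u, ENNReal.ofReal ((u - s) ^ r) = ENNReal.ofReal (u ^ (r + 1) / (r + 1)) := by
  have hint : IntervalIntegrable (fun s : ℝ => (u - s) ^ r) volume 0 u := by
    simpa using ((intervalIntegrable_rpow' (a := 0) (b := u) hr).comp_sub_left u).symm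
  rw [setLIntegral_congr Ioo_ae_eq_Ioc, ← ofReal_integral_eq_lintegral_ofReal
    ((intervalIntegrable_iff_integrableOn_Ioc_of_le hu).mp hint)
    ((ae_restrict_iff' measurableSet_Ioc).mpr
      (.of_forall fun s hs => Real.rpow_nonneg (sub_nonneg.mpr hs.2) r)),
    ← intervalIntegral.integral_of_le hu, integral_comp_sub_left (fun s => s ^ r), sub_self,
    sub_zero, integral_rpow (.inl hr), Real.zero_rpow (by linarith), sub_zero]

lemma rpow_mul_sub_rpow_le_add {a b s u : ℝ} (ha : a ≤ 0) (hb : b ≤ 0) (hs : 0 < s) (hsu : s < u) :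
    s ^ a * (u - s) ^ b ≤ (u / 2) ^ b * s ^ a + (u / 2) ^ a * (u - s) ^ b := by
  have hsa := Real.rpow_nonneg hs.le a
  have hsb := Real.rpow_nonneg (sub_nonneg.mpr hsu.le) b
  have hua := Real.rpow_nonneg (by linarith : 0 ≤ u / 2) a
  have hub := Real.rpow_nonneg (by linarith : 0 ≤ u / 2) b
  rcases le_total s (u / 2) with h | h
  · have : (u - s) ^ b ≤ (u / 2) ^ b := Real.rpow_le_rpow_of_nonpos (by linarith) (by linarith) hb
    nlinarith [mul_nonneg hua hsb]
  · have : s ^ a ≤ (u / 2) ^ a := Real.rpow_le_rpow_of_nonpos (by linarith) h ha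
    nlinarith [mul_nonneg hub hsa]

-- For `a, b ∈ (-1, 0]` this bounds the Beta value `B(a + 1, b + 1) = ∫₀¹ t ^ a * (1 - t) ^ b`.
noncomputable def betaConst (a b : ℝ) : ℝ := 2 ^ (-b) / (a + 1) + 2 ^ (-a) / (b + 1)

lemma betaConst_pos {a b : ℝ} (ha : -1 < a) (hb : -1 < b) : 0 < betaConst a b :=
  add_pos (div_pos (by positivity) (by linarith)) (div_pos (by positivity) (by linarith))

lemma lintegral_Ioo_rpow_mul_sub_rpow_le {a b u : ℝ} (ha : -1 < a) (ha0 : a ≤ 0) (hb : -1 < b)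
    (hb0 : b ≤ 0) (hu : 0 < u) :
    ∫⁻ s in Ioo 0 u, ENNReal.ofReal (s ^ a * (u - s) ^ b)
      ≤ ENNReal.ofReal (betaConst a b * u ^ (a + b + 1)) := by
  have hua := Real.rpow_nonneg (by linarith : 0 ≤ u / 2) a
  have hub := Real.rpow_nonneg (by linarith : 0 ≤ u / 2) b
  have hIa : 0 ≤ u ^ (a + 1) / (a + 1) := div_nonneg (Real.rpow_nonneg hu.le _) (by linarith)
  have hIb : 0 ≤ u ^ (b + 1) / (b + 1) := div_nonneg (Real.rpow_nonneg hu.le _) (by linarith)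
  calc ∫⁻ s in Ioo 0 u, ENNReal.ofReal (s ^ a * (u - s) ^ b)
      ≤ ∫⁻ s in Ioo 0 u, ENNReal.ofReal ((u / 2) ^ b) * ENNReal.ofReal (s ^ a)
          + ENNReal.ofReal ((u / 2) ^ a) * ENNReal.ofReal ((u - s) ^ b) := by
        refine setLIntegral_mono (by fun_prop) fun s hs => ?_
        rw [← ENNReal.ofReal_mul hub, ← ENNReal.ofReal_mul hua,
          ← ENNReal.ofReal_add (mul_nonneg hub (Real.rpow_nonneg hs.1.le a))
            (mul_nonneg hua (Real.rpow_nonneg (by linarith [hs.2]) b))]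
        exact ENNReal.ofReal_le_ofReal (rpow_mul_sub_rpow_le_add ha0 hb0 hs.1 hs.2)
    _ = ENNReal.ofReal ((u / 2) ^ b * (u ^ (a + 1) / (a + 1))
          + (u / 2) ^ a * (u ^ (b + 1) / (b + 1))) := by
        rw [lintegral_add_left (by fun_prop), lintegral_const_mul' _ _ ENNReal.ofReal_ne_top,
          lintegral_const_mul' _ _ ENNReal.ofReal_ne_top, lintegral_Ioo_rpow ha hu.le,
          lintegral_Ioo_sub_rpow hb hu.le, ← ENNReal.ofReal_mul hub, ← ENNReal.ofReal_mul hua,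
          ← ENNReal.ofReal_add (mul_nonneg hub hIa) (mul_nonneg hua hIb)]
    _ = _ := by
        rw [betaConst]
        congr 1
        rw [Real.div_rpow hu.le zero_le_two, Real.div_rpow hu.le zero_le_two,
          Real.rpow_neg zero_le_two, Real.rpow_neg zero_le_two]
        have h1 : u ^ b * u ^ (a + 1) = u ^ (a + b + 1) := by rw [← Real.rpow_add hu]; ring_nf
        have h2 : u ^ a * u ^ (b + 1) = u ^ (a + b + 1) := by rw [← Real.rpow_add hu]; ring_nf
        field_simp
        rw [h1, mul_assoc (2 ^ b), h2]
        ring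

lemma lintegral_Ioo_lintegral_Ioo_rpow_le {a b c T : ℝ} (ha : -1 < a) (ha0 : a ≤ 0) (hb : -1 < b)
    (hb0 : b ≤ 0) (hcab : -2 < c + a + b) (hT : 0 ≤ T) :
    ∫⁻ u in Ioo 0 T, ∫⁻ s in Ioo 0 u, ENNReal.ofReal (u ^ c * s ^ a * (u - s) ^ b)
      ≤ ENNReal.ofReal (betaConst a b / (c + a + b + 2) * T ^ (c + a + b + 2)) := by
  have hK := (betaConst_pos ha hb).le
  calc ∫⁻ u in Ioo 0 T, ∫⁻ s in Ioo 0 u, ENNReal.ofReal (u ^ c * s ^ a * (u - s) ^ b)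
      ≤ ∫⁻ u in Ioo 0 T, ENNReal.ofReal (betaConst a b) * ENNReal.ofReal (u ^ (c + a + b + 1)) := by
        refine setLIntegral_mono (by fun_prop) fun u hu => ?_
        have hc := Real.rpow_nonneg hu.1.le c
        simp_rw [mul_assoc, ENNReal.ofReal_mul hc]
        rw [lintegral_const_mul' _ _ ENNReal.ofReal_ne_top]
        calc ENNReal.ofReal (u ^ c) * ∫⁻ s in Ioo 0 u, ENNReal.ofReal (s ^ a * (u - s) ^ b)
            ≤ ENNReal.ofReal (u ^ c) * ENNReal.ofReal (betaConst a b * u ^ (a + b + 1)) := by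
              gcongr
              exact lintegral_Ioo_rpow_mul_sub_rpow_le ha ha0 hb hb0 hu.1
          _ = ENNReal.ofReal (betaConst a b) * ENNReal.ofReal (u ^ (c + a + b + 1)) := by
              rw [← ENNReal.ofReal_mul hc, ← ENNReal.ofReal_mul hK,
                show c + a + b + 1 = c + (a + b + 1) by ring, Real.rpow_add hu.1 c, mul_left_comm]
    _ = ENNReal.ofReal (betaConst a b / (c + a + b + 2) * T ^ (c + a + b + 2)) := by
        rw [lintegral_const_mul' _ _ ENNReal.ofReal_ne_top, lintegral_Ioo_rpow (by linarith) hT,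
          ← ENNReal.ofReal_mul hK]
        congr 1
        ring_nf

-- Evaluated at `p = (u, s)`, larger variable first, so that Tonelli integrates `s` inside.
noncomputable def triangleKernel (c a b : ℝ) (p : ℝ × ℝ) : ℝ≥0∞ :=
  if p.2 < p.1 then ENNReal.ofReal (p.1 ^ c * p.2 ^ a * (p.1 - p.2) ^ b) else 0

lemma measurable_triangleKernel (c a b : ℝ) : Measurable (triangleKernel c a b) :=
  Measurable.ite (measurableSet_lt measurable_snd measurable_fst) (by fun_prop) measurable_const

lemma lintegral_triangleKernel_le {a b c T : ℝ} (ha : -1 < a) (ha0 : a ≤ 0) (hb : -1 < b)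
    (hb0 : b ≤ 0) (hcab : -2 < c + a + b) (hT : 0 ≤ T) :
    ∫⁻ p, triangleKernel c a b p ∂(volume.restrict (Ioo 0 T)).prod (volume.restrict (Ioo 0 T))
      ≤ ENNReal.ofReal (betaConst a b / (c + a + b + 2) * T ^ (c + a + b + 2)) := by
  rw [lintegral_prod _ (measurable_triangleKernel c a b).aemeasurable]
  refine le_of_eq_of_le (setLIntegral_congr_fun measurableSet_Ioo fun u hu => ?_)
    (lintegral_Ioo_lintegral_Ioo_rpow_le ha ha0 hb hb0 hcab hT)
  have hslice : Ioo 0 u = Iio u ∩ Ioo 0 T := by rw [Iio_inter_Ioo, min_eq_left hu.2.le]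
  rw [hslice, ← Measure.restrict_restrict measurableSet_Iio,
    ← lintegral_indicator measurableSet_Iio]
  rfl

lemma ae_prod_fst_ne_snd {α : Type*} [MeasurableSpace α] [MeasurableEq α]
    (μ ν : Measure α) [SFinite ν] [NullSingletonClass ν] :
    ∀ᵐ p ∂μ.prod ν, p.1 ≠ p.2 := by
  rw [ae_iff, Measure.prod_apply]
  · simp
  · simp only [ne_eq, not_not]; exact measurableSet_diagonal

lemma lintegral_le_two_mul_of_le_add_swap {α : Type*} [MeasurableSpace α] {μ : Measure α}
    [SFinite μ] {f g : α × α → ℝ≥0∞} (hg : AEMeasurable g (μ.prod μ))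
    (hfg : ∀ᵐ p ∂μ.prod μ, f p ≤ g p + g p.swap) :
    ∫⁻ p, f p ∂μ.prod μ ≤ 2 * ∫⁻ p, g p ∂μ.prod μ := by
  calc ∫⁻ p, f p ∂μ.prod μ ≤ ∫⁻ p, g p + g p.swap ∂μ.prod μ := lintegral_mono_ae hfg
    _ = 2 * ∫⁻ p, g p ∂μ.prod μ := by
      rw [lintegral_add_left' hg, lintegral_prod_swap, two_mul]

lemma sq_le_of_le_mul_rpow {k C x y z e f g : ℝ} (hx : 0 ≤ x) (hy : 0 ≤ y) (hz : 0 ≤ z)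
    (hk0 : 0 ≤ k) (hk : k ≤ C * x ^ e * y ^ f * z ^ g) :
    k ^ 2 ≤ C ^ 2 * (x ^ (2 * e) * y ^ (2 * f) * z ^ (2 * g)) := by
  calc k ^ 2 ≤ (C * x ^ e * y ^ f * z ^ g) ^ 2 := pow_le_pow_left₀ hk0 hk 2
    _ = _ := by
      rw [mul_pow, mul_pow, mul_pow, ← Real.rpow_mul_natCast hx, ← Real.rpow_mul_natCast hy,
        ← Real.rpow_mul_natCast hz]
      push_cast
      ring_nf

lemma integrable_and_integral_le_of_lintegral_le {α : Type*} [MeasurableSpace α] {μ : Measure α}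
    {f : α → ℝ} {B : ℝ} (hf : AEStronglyMeasurable f μ) (hf0 : 0 ≤ᵐ[μ] f) (hB : 0 ≤ B)
    (h : ∫⁻ x, ENNReal.ofReal (f x) ∂μ ≤ ENNReal.ofReal B) :
    Integrable f μ ∧ ∫ x, f x ∂μ ≤ B := by
  refine ⟨⟨hf, (hasFiniteIntegral_iff_ofReal hf0).2 (h.trans_lt ENNReal.ofReal_lt_top)⟩, ?_⟩
  rw [integral_eq_lintegral_of_nonneg_ae hf0 hf]
  exact ENNReal.toReal_le_of_le_ofReal hB h

lemma ofReal_sq_le_triangleKernel_add_swap {k : ℝ → ℝ → ℝ} {C T e f g : ℝ}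
    (hlow : ∀ s u, 0 < s → s < u → u < T →
      0 ≤ k s u ∧ k s u ≤ C * u ^ e * s ^ f * (u - s) ^ g)
    (hup : ∀ s u, 0 < u → u < s → s < T →
      0 ≤ k s u ∧ k s u ≤ C * s ^ e * u ^ f * (s - u) ^ g)
    {p : ℝ × ℝ} (hp : p ∈ Ioo 0 T ×ˢ Ioo 0 T) (hne : p.1 ≠ p.2) :
    ENNReal.ofReal (k p.1 p.2 ^ 2)
      ≤ ENNReal.ofReal (C ^ 2) * triangleKernel (2 * e) (2 * f) (2 * g) p
        + ENNReal.ofReal (C ^ 2) * triangleKernel (2 * e) (2 * f) (2 * g) p.swap := by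
  obtain ⟨s, u⟩ := p
  obtain ⟨⟨hs0, hsT⟩, hu0, huT⟩ := hp
  rcases hne.lt_or_gt with h | h
  · obtain ⟨hk0, hk⟩ := hlow s u hs0 h huT
    simp only [triangleKernel, Prod.swap, if_neg h.not_gt, if_pos h, mul_zero, zero_add,
      ← ENNReal.ofReal_mul (sq_nonneg C)]
    exact ENNReal.ofReal_le_ofReal (sq_le_of_le_mul_rpow hu0.le hs0.le (by linarith) hk0 hk)
  · obtain ⟨hk0, hk⟩ := hup s u hu0 h hsT
    simp only [triangleKernel, Prod.swap, if_neg h.not_gt, if_pos h, mul_zero, add_zero,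
      ← ENNReal.ofReal_mul (sq_nonneg C)]
    exact ENNReal.ofReal_le_ofReal (sq_le_of_le_mul_rpow hs0.le hu0.le (by linarith) hk0 hk)

lemma setLIntegral_sq_le_of_kernel_bounds {k : ℝ → ℝ → ℝ} {C T e f g : ℝ} (hf : -1 < 2 * f)
    (hf0 : f ≤ 0) (hg : -1 < 2 * g) (hg0 : g ≤ 0) (hefg : -2 < 2 * e + 2 * f + 2 * g)
    (hT : 0 ≤ T)
    (hlow : ∀ s u, 0 < s → s < u → u < T →
      0 ≤ k s u ∧ k s u ≤ C * u ^ e * s ^ f * (u - s) ^ g)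
    (hup : ∀ s u, 0 < u → u < s → s < T →
      0 ≤ k s u ∧ k s u ≤ C * s ^ e * u ^ f * (s - u) ^ g) :
    ∫⁻ p in Ioo 0 T ×ˢ Ioo 0 T, ENNReal.ofReal (k p.1 p.2 ^ 2)
      ≤ ENNReal.ofReal (2 * C ^ 2 * (betaConst (2 * f) (2 * g) / (2 * e + 2 * f + 2 * g + 2))
          * T ^ (2 * e + 2 * f + 2 * g + 2)) := by
  set μ := volume.restrict (Ioo (0:ℝ) T)
  have hsq : volume.restrict (Ioo 0 T ×ˢ Ioo 0 T) = μ.prod μ := by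
    rw [Measure.volume_eq_prod, Measure.prod_restrict]
  have hmem : ∀ᵐ p ∂μ.prod μ, p ∈ Ioo 0 T ×ˢ Ioo 0 T :=
    hsq ▸ ae_restrict_mem (measurableSet_Ioo.prod measurableSet_Ioo)
  have hκ := measurable_triangleKernel (2 * e) (2 * f) (2 * g)
  rw [hsq]
  calc _ ≤ 2 * ∫⁻ p, ENNReal.ofReal (C ^ 2) * triangleKernel (2 * e) (2 * f) (2 * g) p
          ∂μ.prod μ := by
        refine lintegral_le_two_mul_of_le_add_swap (hκ.const_mul _).aemeasurable ?_
        filter_upwards [hmem, ae_prod_fst_ne_snd μ μ] with p hp hne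
        exact ofReal_sq_le_triangleKernel_add_swap hlow hup hp hne
    _ ≤ 2 * (ENNReal.ofReal (C ^ 2) * ENNReal.ofReal (betaConst (2 * f) (2 * g)
          / (2 * e + 2 * f + 2 * g + 2) * T ^ (2 * e + 2 * f + 2 * g + 2))) := by
        rw [lintegral_const_mul _ hκ]
        gcongr
        exact lintegral_triangleKernel_le hf (by linarith) hg (by linarith) hefg hT
    _ = _ := by
        rw [← ENNReal.ofReal_mul (sq_nonneg C), ← ENNReal.ofReal_ofNat 2,
          ← ENNReal.ofReal_mul zero_le_two]
        ring_nf

theorem kernel_L2_bound_general (H₁ H₂ T C : ℝ)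
    (h1 : 1/2 < H₁) (h2 : H₂ < 1) (hgap : 1/4 < H₂ - H₁)
    (hT : 0 < T) (hC : 0 < C)
    (k₁ : ℝ → ℝ → ℝ)
    (hmeas : Measurable (fun p : ℝ × ℝ => k₁ p.1 p.2))
    (hlow : ∀ s u, 0 < s → s < u → u < T →
      0 ≤ k₁ s u ∧ k₁ s u ≤ C * u ^ (H₁ - 1/2) * s ^ (1/2 - H₁) * (u - s) ^ (2*H₂ - 2*H₁ - 1))
    (hup : ∀ s u, 0 < u → u < s → s < T →
      0 ≤ k₁ s u ∧ k₁ s u ≤ C * s ^ (H₁ - 1/2) * u ^ (1/2 - H₁) * (s - u) ^ (2*H₂ - 2*H₁ - 1)) :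
    ∃ C' > 0,
      IntegrableOn (fun p : ℝ × ℝ => (k₁ p.1 p.2) ^ 2) (Ioo 0 T ×ˢ Ioo 0 T) ∧
      ∫ p in Ioo 0 T ×ˢ Ioo 0 T, (k₁ p.1 p.2) ^ 2 ≤ C' * T ^ (4*H₂ - 4*H₁) := by
  have hbound := setLIntegral_sq_le_of_kernel_bounds (by linarith) (by linarith) (by linarith)
    (by linarith) (by linarith) hT.le hlow hup
  rw [show 2 * (H₁ - 1/2) + 2 * (1/2 - H₁) + 2 * (2*H₂ - 2*H₁ - 1) + 2 = 4*H₂ - 4*H₁ by ring]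
    at hbound
  have hK : 0 < betaConst (2 * (1/2 - H₁)) (2 * (2*H₂ - 2*H₁ - 1)) / (4*H₂ - 4*H₁) :=
    div_pos (betaConst_pos (by linarith) (by linarith)) (by linarith)
  exact ⟨_, by positivity, integrable_and_integral_le_of_lintegral_le
    (hmeas.pow_const 2).aestronglyMeasurable (.of_forall fun p => sq_nonneg _) (by positivity)
    hbound⟩

/-- If `H₂ - H₁ > 1/4`, a kernel `k₁` satisfying the standing pointwise bounds is
square integrable on `[0,T]²`, with `‖k₁‖²_{L²} ≤ C' T^{4H₂-4H₁}`. -/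
theorem kernel_L2_bound (H₁ H₂ T C : ℝ)
    (h1 : 1/2 < H₁) (h12 : H₁ < H₂) (h2 : H₂ < 1) (hgap : 1/4 < H₂ - H₁)
    (hT : 0 < T) (hC : 0 < C)
    (k₁ : ℝ → ℝ → ℝ)
    (hmeas : Measurable (fun p : ℝ × ℝ => k₁ p.1 p.2))
    (hlow : ∀ s u, 0 < s → s < u → u < T →
      0 ≤ k₁ s u ∧ k₁ s u ≤ C * u ^ (H₁ - 1/2) * s ^ (1/2 - H₁) * (u - s) ^ (2*H₂ - 2*H₁ - 1))
    (hup : ∀ s u, 0 < u → u < s → s < T →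
      0 ≤ k₁ s u ∧ k₁ s u ≤ C * s ^ (H₁ - 1/2) * u ^ (1/2 - H₁) * (s - u) ^ (2*H₂ - 2*H₁ - 1)) :
    ∃ C' > 0,
      IntegrableOn (fun p : ℝ × ℝ => (k₁ p.1 p.2) ^ 2) (Ioo 0 T ×ˢ Ioo 0 T) ∧
      ∫ p in Ioo 0 T ×ˢ Ioo 0 T, (k₁ p.1 p.2) ^ 2 ≤ C' * T ^ (4*H₂ - 4*H₁) :=
  kernel_L2_bound_general H₁ H₂ T C h1 h2 hgap hT hC k₁ hmeas hlow hup
end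

section
/- Fractional integration by parts: for α ∈ (0,1) and suitable functions f, g on [a,b] (e.g. f with 𝒟^α_{a+} f ∈ L^p, g with 𝒟^α_{b-} g ∈ L^q, 1/p + 1/q ≤ 1 + α), one has ∫ₐᵇ (𝒟^α_{a+} f)(x) g(x) dx = ∫ₐᵇ f(x) (𝒟^α_{b-} g)(x) dx. -/
/-!
Write `f = I^α_{a+}φ` and `g = I^α_{b-}ψ`. The semigroup identity `I^{1-α}_{a+} I^α_{a+} φ = ∫ₐ φ`,
obtained by Fubini on the triangle `a < s < t ≤ y` and the Beta integral
`∫ₛʸ (t-s)^{α-1} (y-t)^{-α} dt = Γ(α) Γ(1-α)`, turns `𝒟^α_{a+} f` into the derivative of an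
indefinite integral of `φ`, so `𝒟^α_{a+} f = φ` a.e. by Lebesgue's differentiation theorem;
likewise `𝒟^α_{b-} g = ψ` a.e. Both sides then equal `∫ₐᵇ φ · I^α_{b-}ψ = ∫ₐᵇ I^α_{a+}φ · ψ`,
one more Fubini on a triangle, justified for `φ, ψ ∈ L²` by `|φ(x) ψ(t)| ≤ φ(x)² + ψ(t)²` and
`∫ₓᵇ (t-x)^{α-1} dt ≤ (b-a)^α / α`.
-/

open MeasureTheory intervalIntegral Real Set

theorem MeasureTheory.Integrable.fst_mul_of_integral_norm_le {α β : Type*} [MeasurableSpace α]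
    [MeasurableSpace β] {μ : Measure α} {ν : Measure β} [SFinite ν] {φ : α → ℝ}
    {k : α × β → ℝ} {C : ℝ} (hφ : Integrable φ μ) (hk : AEStronglyMeasurable k (μ.prod ν))
    (hk_int : ∀ᵐ x ∂μ, Integrable (fun y => k (x, y)) ν)
    (hk_le : ∀ᵐ x ∂μ, ∫ y, ‖k (x, y)‖ ∂ν ≤ C) :
    Integrable (fun p => φ p.1 * k p) (μ.prod ν) := by
  have hm : AEStronglyMeasurable (fun p : α × β => φ p.1 * k p) (μ.prod ν) :=
    hφ.aestronglyMeasurable.comp_fst.mul hk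
  refine (integrable_prod_iff hm).2 ⟨?_, ?_⟩
  · filter_upwards [hk_int] with x hx using hx.const_mul (φ x)
  · refine (hφ.norm.mul_const C).mono' hm.norm.integral_prod_right' ?_
    filter_upwards [hk_le] with x hx
    simp only [norm_mul, norm_norm, MeasureTheory.integral_const_mul]
    rw [Real.norm_of_nonneg (integral_nonneg fun _ => norm_nonneg _)]
    exact mul_le_mul_of_nonneg_left hx (norm_nonneg _)

theorem MeasureTheory.Integrable.mul_snd_of_integral_norm_le {α β : Type*} [MeasurableSpace α]
    [MeasurableSpace β] {μ : Measure α} {ν : Measure β} [SFinite μ] [SFinite ν] {ψ : β → ℝ}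
    {k : α × β → ℝ} {C : ℝ} (hψ : Integrable ψ ν) (hk : AEStronglyMeasurable k (μ.prod ν))
    (hk_int : ∀ᵐ y ∂ν, Integrable (fun x => k (x, y)) μ)
    (hk_le : ∀ᵐ y ∂ν, ∫ x, ‖k (x, y)‖ ∂μ ≤ C) :
    Integrable (fun p => k p * ψ p.2) (μ.prod ν) := by
  have := (hψ.fst_mul_of_integral_norm_le hk.prod_swap hk_int hk_le).swap
  simpa only [Function.comp_def, Prod.fst_swap, Prod.swap_swap, mul_comm] using this

section PowerKernels

variable {p q s y : ℝ}

theorem integral_sub_rpow_sub_one (hp : 0 < p) (s y : ℝ) :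
    ∫ t in s..y, (t - s) ^ (p - 1) = (y - s) ^ p / p := by
  rw [integral_comp_sub_right (· ^ (p - 1)), sub_self, integral_rpow (Or.inl (by linarith)),
    sub_add_cancel, zero_rpow hp.ne', sub_zero]

theorem integral_rpow_sub_sub_one (hp : 0 < p) (s y : ℝ) :
    ∫ t in s..y, (y - t) ^ (p - 1) = (y - s) ^ p / p := by
  rw [integral_comp_sub_left (· ^ (p - 1)), sub_self, integral_symm,
    integral_rpow (Or.inl (by linarith)), sub_add_cancel, zero_rpow hp.ne', zero_sub, neg_div,
    neg_neg]

theorem intervalIntegrable_sub_rpow_sub_one (hp : 0 < p) (s y : ℝ) :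
    IntervalIntegrable (fun t => (t - s) ^ (p - 1)) volume s y := by
  simpa using
    (intervalIntegrable_rpow' (a := 0) (b := y - s) (r := p - 1) (by linarith)).comp_sub_right s

theorem intervalIntegrable_rpow_sub_sub_one (hp : 0 < p) (s y : ℝ) :
    IntervalIntegrable (fun t => (y - t) ^ (p - 1)) volume s y := by
  simpa using
    (intervalIntegrable_rpow' (a := y - s) (b := 0) (r := p - 1) (by linarith)).comp_sub_left y

theorem integral_sub_rpow_mul_sub_rpow_s15 (hp : 0 < p) (hq : 0 < q) (hsy : s < y) :
    ∫ t in s..y, (t - s) ^ (p - 1) * (y - t) ^ (q - 1) =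
      (y - s) ^ (p + q - 1) * (Gamma p * Gamma q / Gamma (p + q)) := by
  have hys : 0 < y - s := sub_pos.2 hsy
  have hC := Complex.betaIntegral_scaled p q hys
  rw [Complex.betaIntegral_eq_Gamma_mul_div _ _ (by simpa) (by simpa)] at hC
  have hcast : ∫ x in (0 : ℝ)..(y - s),
      (x : ℂ) ^ ((p : ℂ) - 1) * (((y - s : ℝ) : ℂ) - x) ^ ((q : ℂ) - 1) =
      ((∫ x in (0 : ℝ)..(y - s), x ^ (p - 1) * ((y - s) - x) ^ (q - 1) : ℝ) : ℂ) := by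
    rw [← intervalIntegral.integral_ofReal]
    refine integral_congr fun x hx => ?_
    rw [uIcc_of_le hys.le] at hx
    push_cast
    rw [Complex.ofReal_cpow hx.1, Complex.ofReal_cpow (sub_nonneg.2 hx.2)]
    push_cast
    rfl
  rw [hcast] at hC
  have hshift := integral_comp_sub_right (a := s) (b := y)
    (fun x => x ^ (p - 1) * ((y - s) - x) ^ (q - 1)) s
  simp only [sub_self, sub_sub_sub_cancel_right] at hshift
  rw [hshift]
  apply Complex.ofReal_injective
  rw [hC, Complex.ofReal_mul, Complex.ofReal_cpow hys.le, Complex.ofReal_div, Complex.ofReal_mul,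
    ← Complex.Gamma_ofReal, ← Complex.Gamma_ofReal, ← Complex.Gamma_ofReal]
  push_cast
  rfl

-- The Beta integral is nonzero, so its integrand is integrable.
theorem intervalIntegrable_sub_rpow_mul_sub_rpow_s15 (hp : 0 < p) (hq : 0 < q) (hsy : s < y) :
    IntervalIntegrable (fun t => (t - s) ^ (p - 1) * (y - t) ^ (q - 1)) volume s y := by
  refine intervalIntegrable_of_integral_ne_zero ?_
  rw [integral_sub_rpow_mul_sub_rpow_s15 hp hq hsy]
  have := sub_pos.2 hsy
  positivity

theorem integral_sub_rpow_mul_sub_rpow_neg (hp : 0 < p) (hp1 : p < 1) (hsy : s < y) :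
    ∫ t in s..y, (t - s) ^ (p - 1) * (y - t) ^ (-p) = Gamma p * Gamma (1 - p) := by
  have := integral_sub_rpow_mul_sub_rpow_s15 hp (sub_pos.2 hp1) hsy
  simpa only [add_sub_cancel, sub_self, rpow_zero, one_mul, sub_sub_cancel_left, Gamma_one,
    div_one] using this

end PowerKernels

-- Half-open so that its slices are the `Ioc x b` and (up to a point) `Ioc a t` of interval
-- integrals.
def triangle (a b : ℝ) : Set (ℝ × ℝ) := {p | a < p.1 ∧ p.1 < p.2 ∧ p.2 ≤ b}

section Triangle

variable {a b : ℝ}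

theorem measurableSet_triangle (a b : ℝ) : MeasurableSet (triangle a b) :=
  (measurableSet_lt measurable_const measurable_fst).inter
    ((measurableSet_lt measurable_fst measurable_snd).inter
      (measurableSet_le measurable_snd measurable_const))

theorem triangle_subset_Ioc_prod_Ioc : triangle a b ⊆ Ioc a b ×ˢ Ioc a b :=
  fun _ ⟨hx, hxt, ht⟩ => ⟨⟨hx, hxt.le.trans ht⟩, ⟨hx.trans hxt, ht⟩⟩

theorem volume_restrict_triangle {u v : Set ℝ} (h : triangle a b ⊆ u ×ˢ v) :
    volume.restrict (triangle a b) =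
      ((volume.restrict u).prod (volume.restrict v)).restrict (triangle a b) := by
  rw [Measure.prod_restrict, ← Measure.volume_eq_prod,
    Measure.restrict_restrict (measurableSet_triangle a b), inter_eq_left.2 h]

variable {E : Type*} [NormedAddCommGroup E] {F : ℝ → ℝ → E} {x t : ℝ}

theorem indicator_triangle_mk_of_lt (h : a < x) :
    (triangle a b).indicator (Function.uncurry F) (x, t) = (Ioc x b).indicator (F x) t := by
  simp only [indicator_apply, triangle, mem_ofPred_eq, mem_Ioc, h, true_and,
    Function.uncurry_apply_pair]

theorem indicator_triangle_mk_of_le (h : t ≤ b) :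
    (triangle a b).indicator (Function.uncurry F) (x, t) = (Ioo a t).indicator (F · t) x := by
  simp only [indicator_apply, triangle, mem_ofPred_eq, mem_Ioo, h, and_true,
    Function.uncurry_apply_pair]

theorem indicator_triangle_mk_eq_zero_of_notMem (h : x ∉ Ioc a b ∨ t ∉ Ioc a b) :
    (triangle a b).indicator (Function.uncurry F) (x, t) = 0 :=
  indicator_of_notMem (fun hp => by
    have := triangle_subset_Ioc_prod_Ioc hp; exact h.elim (· this.1) (· this.2)) _

variable [NormedSpace ℝ E]

theorem integral_indicator_triangle_mk_left (x : ℝ) :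
    ∫ t, (triangle a b).indicator (Function.uncurry F) (x, t) =
      (Ioc a b).indicator (fun x => ∫ t in x..b, F x t) x := by
  by_cases hx : x ∈ Ioc a b
  · simp_rw [indicator_triangle_mk_of_lt hx.1, MeasureTheory.integral_indicator measurableSet_Ioc,
      indicator_of_mem hx, integral_of_le hx.2]
  · simp_rw [indicator_triangle_mk_eq_zero_of_notMem (Or.inl hx), indicator_of_notMem hx,
      MeasureTheory.integral_zero]

theorem integral_indicator_triangle_mk_right (t : ℝ) :
    ∫ x, (triangle a b).indicator (Function.uncurry F) (x, t) =
      (Ioc a b).indicator (fun t => ∫ x in a..t, F x t) t := by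
  by_cases ht : t ∈ Ioc a b
  · simp_rw [indicator_triangle_mk_of_le ht.2, MeasureTheory.integral_indicator measurableSet_Ioo,
      indicator_of_mem ht, integral_of_le ht.1.le, integral_Ioc_eq_integral_Ioo]
  · simp_rw [indicator_triangle_mk_eq_zero_of_notMem (Or.inr ht), indicator_of_notMem ht,
      MeasureTheory.integral_zero]

theorem integral_integral_swap_triangle [CompleteSpace E] (hab : a ≤ b)
    (hF : IntegrableOn (Function.uncurry F) (triangle a b)) :
    ∫ x in a..b, ∫ t in x..b, F x t = ∫ t in a..b, ∫ x in a..t, F x t := by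
  have hF' := (integrable_indicator_iff (measurableSet_triangle a b)).2 hF
  rw [Measure.volume_eq_prod] at hF'
  have hx := integral_prod _ hF'
  rw [integral_prod_symm _ hF'] at hx
  simp_rw [integral_indicator_triangle_mk_left, integral_indicator_triangle_mk_right,
    MeasureTheory.integral_indicator measurableSet_Ioc] at hx
  rw [integral_of_le hab, integral_of_le hab, hx]

theorem integrableOn_triangle_fst_mul {φ : ℝ → ℝ} {K : ℝ → ℝ → ℝ} {C : ℝ}
    (hφ : IntegrableOn φ (Ioc a b)) (hK : Measurable (Function.uncurry K))
    (hK0 : ∀ p ∈ triangle a b, 0 ≤ Function.uncurry K p)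
    (hK_int : ∀ x ∈ Ioo a b, IntegrableOn (K x) (Ioc x b))
    (hK_le : ∀ x ∈ Ioo a b, ∫ t in x..b, K x t ≤ C) :
    IntegrableOn (fun p : ℝ × ℝ => φ p.1 * K p.1 p.2) (triangle a b) := by
  rw [IntegrableOn, volume_restrict_triangle (u := Ioc a b) (v := univ)
    (fun p hp => ⟨(triangle_subset_Ioc_prod_Ioc hp).1, trivial⟩), Measure.restrict_univ,
    ← IntegrableOn, ← integrable_indicator_iff (measurableSet_triangle a b)]
  have hae : ∀ᵐ x ∂volume.restrict (Ioc a b), x ∈ Ioo a b := by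
    rw [← Measure.restrict_congr_set Ioo_ae_eq_Ioc]
    exact ae_restrict_mem measurableSet_Ioo
  refine (hφ.fst_mul_of_integral_norm_le (C := C)
    (hK.indicator (measurableSet_triangle a b)).aestronglyMeasurable ?_ ?_).congr
    (ae_of_all _ fun p => (indicator_mul_right _ (fun p : ℝ × ℝ => φ p.1) _).symm)
  · filter_upwards [hae] with x hx
    simp_rw [indicator_triangle_mk_of_lt hx.1]
    exact (integrable_indicator_iff measurableSet_Ioc).2 (hK_int x hx)
  · filter_upwards [hae] with x hx
    simp_rw [Real.norm_of_nonneg (indicator_nonneg hK0 _), integral_indicator_triangle_mk_left,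
      indicator_of_mem (Ioo_subset_Ioc_self hx)]
    exact hK_le x hx

theorem integrableOn_triangle_mul_snd {ψ : ℝ → ℝ} {K : ℝ → ℝ → ℝ} {C : ℝ}
    (hψ : IntegrableOn ψ (Ioc a b)) (hK : Measurable (Function.uncurry K))
    (hK0 : ∀ p ∈ triangle a b, 0 ≤ Function.uncurry K p)
    (hK_int : ∀ t ∈ Ioo a b, IntegrableOn (K · t) (Ioc a t))
    (hK_le : ∀ t ∈ Ioo a b, ∫ x in a..t, K x t ≤ C) :
    IntegrableOn (fun p : ℝ × ℝ => K p.1 p.2 * ψ p.2) (triangle a b) := by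
  rw [IntegrableOn, volume_restrict_triangle (u := univ) (v := Ioc a b)
    (fun p hp => ⟨trivial, (triangle_subset_Ioc_prod_Ioc hp).2⟩), Measure.restrict_univ,
    ← IntegrableOn, ← integrable_indicator_iff (measurableSet_triangle a b)]
  have hae : ∀ᵐ t ∂volume.restrict (Ioc a b), t ∈ Ioo a b := by
    rw [← Measure.restrict_congr_set Ioo_ae_eq_Ioc]
    exact ae_restrict_mem measurableSet_Ioo
  refine (hψ.mul_snd_of_integral_norm_le (C := C)
    (hK.indicator (measurableSet_triangle a b)).aestronglyMeasurable ?_ ?_).congr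
    (ae_of_all _ fun p => (indicator_mul_left _ _ (fun p : ℝ × ℝ => ψ p.2)).symm)
  · filter_upwards [hae] with t ht
    simp_rw [indicator_triangle_mk_of_le ht.2.le]
    exact (integrable_indicator_iff measurableSet_Ioo).2
      ((hK_int t ht).mono_set Ioo_subset_Ioc_self)
  · filter_upwards [hae] with t ht
    simp_rw [Real.norm_of_nonneg (indicator_nonneg hK0 _), integral_indicator_triangle_mk_right,
      indicator_of_mem (Ioo_subset_Ioc_self ht)]
    exact hK_le t ht

end Triangle

-- `I^α_{a+}φ` and `I^α_{b-}ψ`.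
noncomputable def fracIntegralLeft (α a : ℝ) (φ : ℝ → ℝ) (x : ℝ) : ℝ :=
  (Gamma α)⁻¹ * ∫ t in a..x, φ t * (x - t) ^ (α - 1)

noncomputable def fracIntegralRight (α b : ℝ) (ψ : ℝ → ℝ) (x : ℝ) : ℝ :=
  (Gamma α)⁻¹ * ∫ t in x..b, ψ t * (t - x) ^ (α - 1)

section Semigroup

variable {α a b y : ℝ} {φ ψ : ℝ → ℝ}

theorem fracIntegralLeft_one_sub_fracIntegralLeft (hα0 : 0 < α) (hα1 : α < 1) (hay : a < y)
    (hφ : IntegrableOn φ (Ioc a y)) :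
    fracIntegralLeft (1 - α) a (fracIntegralLeft α a φ) y = ∫ t in a..y, φ t := by
  set K : ℝ → ℝ → ℝ := fun s t => (t - s) ^ (α - 1) * (y - t) ^ (-α) with hK
  have hKval : ∀ s ∈ Ioo a y, ∫ t in s..y, K s t = Gamma α * Gamma (1 - α) :=
    fun s hs => integral_sub_rpow_mul_sub_rpow_neg hα0 hα1 hs.2
  have hF : IntegrableOn (fun p : ℝ × ℝ => φ p.1 * K p.1 p.2) (triangle a y) := by
    refine integrableOn_triangle_fst_mul hφ (by fun_prop) (fun p hp => ?_) (fun s hs => ?_)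
      (fun s hs => (hKval s hs).le)
    · have := hp.2.1; have := hp.2.2
      exact mul_nonneg (rpow_nonneg (by linarith) _) (rpow_nonneg (by linarith) _)
    · have := intervalIntegrable_sub_rpow_mul_sub_rpow_s15 hα0 (sub_pos.2 hα1) hs.2
      rw [sub_sub_cancel_left] at this
      exact (intervalIntegrable_iff_integrableOn_Ioc_of_le hs.2.le).1 this
  calc fracIntegralLeft (1 - α) a (fracIntegralLeft α a φ) y
      = (Gamma (1 - α))⁻¹ * (Gamma α)⁻¹ * ∫ t in a..y, ∫ s in a..t, φ s * K s t := by
        simp only [fracIntegralLeft, hK, sub_sub_cancel_left, ← intervalIntegral.integral_mul_const,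
          ← intervalIntegral.integral_const_mul, mul_assoc]
    _ = (Gamma (1 - α))⁻¹ * (Gamma α)⁻¹ * ∫ s in a..y, φ s * (Gamma α * Gamma (1 - α)) := by
        rw [← integral_integral_swap_triangle (F := fun s t => φ s * K s t) hay.le hF]
        congr 1
        refine integral_congr_Ioo_of_le hay.le fun s hs => ?_
        rw [intervalIntegral.integral_const_mul, hKval s hs]
    _ = ∫ t in a..y, φ t := by
        rw [intervalIntegral.integral_mul_const]
        have := (Gamma_pos_of_pos hα0).ne'
        have := (Gamma_pos_of_pos (sub_pos.2 hα1)).ne'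
        field_simp

theorem fracIntegralRight_one_sub_fracIntegralRight (hα0 : 0 < α) (hα1 : α < 1) (hyb : y < b)
    (hψ : IntegrableOn ψ (Ioc y b)) :
    fracIntegralRight (1 - α) b (fracIntegralRight α b ψ) y = ∫ t in y..b, ψ t := by
  set K : ℝ → ℝ → ℝ := fun t s => (t - y) ^ (-α) * (s - t) ^ (α - 1) with hK
  have hKval : ∀ s ∈ Ioo y b, ∫ t in y..s, K t s = Gamma (1 - α) * Gamma α := fun s hs => by
    simpa only [sub_sub_cancel_left, neg_sub, sub_sub_cancel] using
      integral_sub_rpow_mul_sub_rpow_neg (sub_pos.2 hα1) (sub_lt_self 1 hα0) hs.1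
  have hF : IntegrableOn (fun p : ℝ × ℝ => K p.1 p.2 * ψ p.2) (triangle y b) := by
    refine integrableOn_triangle_mul_snd hψ (by fun_prop) (fun p hp => ?_) (fun s hs => ?_)
      (fun s hs => (hKval s hs).le)
    · have := hp.1; have := hp.2.1
      exact mul_nonneg (rpow_nonneg (by linarith) _) (rpow_nonneg (by linarith) _)
    · have := intervalIntegrable_sub_rpow_mul_sub_rpow_s15 (sub_pos.2 hα1) hα0 hs.1
      rw [sub_sub_cancel_left] at this
      exact (intervalIntegrable_iff_integrableOn_Ioc_of_le hs.1.le).1 this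
  calc fracIntegralRight (1 - α) b (fracIntegralRight α b ψ) y
      = (Gamma (1 - α))⁻¹ * (Gamma α)⁻¹ * ∫ t in y..b, ∫ s in t..b, K t s * ψ s := by
        simp only [fracIntegralRight, sub_sub_cancel_left, ← intervalIntegral.integral_mul_const,
          ← intervalIntegral.integral_const_mul, mul_assoc]
        refine integral_congr fun t _ => integral_congr fun s _ => ?_
        simp only [hK]
        ring
    _ = (Gamma (1 - α))⁻¹ * (Gamma α)⁻¹ * ∫ s in y..b, Gamma (1 - α) * Gamma α * ψ s := by
        rw [integral_integral_swap_triangle (F := fun t s => K t s * ψ s) hyb.le hF]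
        congr 1
        refine integral_congr_Ioo_of_le hyb.le fun s hs => ?_
        rw [intervalIntegral.integral_mul_const, hKval s hs]
    _ = ∫ t in y..b, ψ t := by
        rw [intervalIntegral.integral_const_mul]
        have := (Gamma_pos_of_pos hα0).ne'
        have := (Gamma_pos_of_pos (sub_pos.2 hα1)).ne'
        field_simp

end Semigroup

-- `𝒟^α_{a+} f` and `𝒟^α_{b-} g`.
noncomputable def fracDerivLeft (α a : ℝ) (f : ℝ → ℝ) (x : ℝ) : ℝ :=
  (Gamma (1 - α))⁻¹ * deriv (fun y => ∫ t in a..y, f t * (y - t) ^ (-α)) x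

noncomputable def fracDerivRight (α b : ℝ) (g : ℝ → ℝ) (x : ℝ) : ℝ :=
  -(Gamma (1 - α))⁻¹ * deriv (fun y => ∫ t in y..b, g t * (t - y) ^ (-α)) x

section Derivative

variable {α a b : ℝ} {φ ψ : ℝ → ℝ}

theorem fracDerivLeft_eq_deriv_fracIntegralLeft (f : ℝ → ℝ) (x : ℝ) :
    fracDerivLeft α a f x = deriv (fracIntegralLeft (1 - α) a f) x := by
  rw [fracDerivLeft, ← deriv_const_mul_field]
  unfold fracIntegralLeft
  simp only [sub_sub_cancel_left]

theorem fracDerivRight_eq_neg_deriv_fracIntegralRight (g : ℝ → ℝ) (x : ℝ) :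
    fracDerivRight α b g x = -deriv (fracIntegralRight (1 - α) b g) x := by
  rw [fracDerivRight, neg_mul, ← deriv_const_mul_field]
  unfold fracIntegralRight
  simp only [sub_sub_cancel_left]

theorem fracDerivLeft_fracIntegralLeft_ae_eq (hα0 : 0 < α) (hα1 : α < 1)
    (hφ : IntegrableOn φ (Ioc a b)) :
    fracDerivLeft α a (fracIntegralLeft α a φ) =ᵐ[volume.restrict (Ioc a b)] φ := by
  obtain hba | hab := le_or_gt b a
  · simp [Ioc_eq_empty hba.not_gt, Filter.EventuallyEq]
  have hφ' := (intervalIntegrable_iff_integrableOn_Ioc_of_le hab.le).2 hφ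
  rw [Filter.EventuallyEq, ← Measure.restrict_congr_set Ioo_ae_eq_Ioc,
    ae_restrict_iff' measurableSet_Ioo]
  filter_upwards [hφ'.ae_hasDerivAt_integral] with x hx hxab
  rw [uIcc_of_le hab.le] at hx
  rw [fracDerivLeft_eq_deriv_fracIntegralLeft]
  refine ((hx (Ioo_subset_Icc_self hxab) a (left_mem_Icc.2 hab.le)).congr_of_eventuallyEq ?_).deriv
  filter_upwards [Ioo_mem_nhds hxab.1 hxab.2] with z hz
  exact fracIntegralLeft_one_sub_fracIntegralLeft hα0 hα1 hz.1
    (hφ.mono_set (Ioc_subset_Ioc_right hz.2.le))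

theorem fracDerivRight_fracIntegralRight_ae_eq (hα0 : 0 < α) (hα1 : α < 1)
    (hψ : IntegrableOn ψ (Ioc a b)) :
    fracDerivRight α b (fracIntegralRight α b ψ) =ᵐ[volume.restrict (Ioc a b)] ψ := by
  obtain hba | hab := le_or_gt b a
  · simp [Ioc_eq_empty hba.not_gt, Filter.EventuallyEq]
  have hψ' := (intervalIntegrable_iff_integrableOn_Ioc_of_le hab.le).2 hψ
  rw [Filter.EventuallyEq, ← Measure.restrict_congr_set Ioo_ae_eq_Ioc,
    ae_restrict_iff' measurableSet_Ioo]
  filter_upwards [hψ'.ae_hasDerivAt_integral] with x hx hxab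
  rw [uIcc_of_le hab.le] at hx
  rw [fracDerivRight_eq_neg_deriv_fracIntegralRight, neg_eq_iff_eq_neg]
  refine ((hx (Ioo_subset_Icc_self hxab) b (right_mem_Icc.2 hab.le)).neg.congr_of_eventuallyEq
    ?_).deriv
  filter_upwards [Ioo_mem_nhds hxab.1 hxab.2] with z hz
  rw [fracIntegralRight_one_sub_fracIntegralRight hα0 hα1 hz.2
    (hψ.mono_set (Ioc_subset_Ioc_left hz.1.le)), integral_symm]
  rfl

end Derivative

theorem integrableOn_triangle_mul_sub_rpow_mul {α a b : ℝ} {φ ψ : ℝ → ℝ} (hα : 0 < α)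
    (hφ : MemLp φ 2 (volume.restrict (Ioc a b))) (hψ : MemLp ψ 2 (volume.restrict (Ioc a b))) :
    IntegrableOn (fun p : ℝ × ℝ => φ p.1 * (p.2 - p.1) ^ (α - 1) * ψ p.2) (triangle a b) := by
  set K : ℝ → ℝ → ℝ := fun x t => (t - x) ^ (α - 1)
  have hKm : Measurable (Function.uncurry K) := by fun_prop
  have hK0 : ∀ p ∈ triangle a b, 0 ≤ Function.uncurry K p :=
    fun p hp => rpow_nonneg (sub_nonneg.2 hp.2.1.le) _
  have hle : ∀ {x t}, a ≤ x → x ≤ t → t ≤ b → (t - x) ^ α / α ≤ (b - a) ^ α / α :=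
    fun hax hxt htb => div_le_div_of_nonneg_right
      (rpow_le_rpow (sub_nonneg.2 hxt) (by linarith) hα.le) hα.le
  have hφK : IntegrableOn (fun p : ℝ × ℝ => φ p.1 ^ 2 * K p.1 p.2) (triangle a b) :=
    integrableOn_triangle_fst_mul hφ.integrable_sq hKm hK0
      (fun x hx => (intervalIntegrable_iff_integrableOn_Ioc_of_le hx.2.le).1
        (intervalIntegrable_sub_rpow_sub_one hα x b))
      (fun x hx => (integral_sub_rpow_sub_one hα x b).trans_le (hle hx.1.le hx.2.le le_rfl))
  have hKψ : IntegrableOn (fun p : ℝ × ℝ => K p.1 p.2 * ψ p.2 ^ 2) (triangle a b) :=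
    integrableOn_triangle_mul_snd hψ.integrable_sq hKm hK0
      (fun t ht => (intervalIntegrable_iff_integrableOn_Ioc_of_le ht.1.le).1
        (intervalIntegrable_rpow_sub_sub_one hα a t))
      (fun t ht => (integral_rpow_sub_sub_one hα a t).trans_le (hle le_rfl ht.1.le ht.2.le))
  refine (hφK.add hKψ).mono' ?_ (ae_restrict_of_forall_mem (measurableSet_triangle a b)
    fun p hp => ?_)
  · rw [volume_restrict_triangle triangle_subset_Ioc_prod_Ioc]
    exact ((hφ.1.comp_fst.mul hKm.aestronglyMeasurable).mul hψ.1.comp_snd).restrict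
  · have hk : 0 ≤ (p.2 - p.1) ^ (α - 1) := hK0 p hp
    have := two_mul_le_add_sq |φ p.1| |ψ p.2|
    rw [sq_abs, sq_abs] at this
    simp only [Pi.add_apply, K, norm_mul, Real.norm_eq_abs, abs_of_nonneg hk]
    nlinarith [abs_nonneg (φ p.1), abs_nonneg (ψ p.2), abs_mul_abs_self (φ p.1)]

theorem integral_mul_fracIntegralRight {α a b : ℝ} {φ ψ : ℝ → ℝ} (hα : 0 < α) (hab : a ≤ b)
    (hφ : MemLp φ 2 (volume.restrict (Ioc a b))) (hψ : MemLp ψ 2 (volume.restrict (Ioc a b))) :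
    ∫ x in a..b, φ x * fracIntegralRight α b ψ x =
      ∫ x in a..b, fracIntegralLeft α a φ x * ψ x := by
  calc ∫ x in a..b, φ x * fracIntegralRight α b ψ x
      = (Gamma α)⁻¹ * ∫ x in a..b, ∫ t in x..b, φ x * (t - x) ^ (α - 1) * ψ t := by
        simp only [fracIntegralRight, ← intervalIntegral.integral_const_mul]
        refine integral_congr fun x _ => integral_congr fun t _ => ?_
        ring
    _ = (Gamma α)⁻¹ * ∫ t in a..b, ∫ x in a..t, φ x * (t - x) ^ (α - 1) * ψ t := by
        rw [integral_integral_swap_triangle (F := fun x t => φ x * (t - x) ^ (α - 1) * ψ t) hab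
          (integrableOn_triangle_mul_sub_rpow_mul hα hφ hψ)]
    _ = ∫ x in a..b, fracIntegralLeft α a φ x * ψ x := by
        simp only [fracIntegralLeft, ← intervalIntegral.integral_const_mul,
          ← intervalIntegral.integral_mul_const]
        refine integral_congr fun t _ => integral_congr fun x _ => ?_
        ring

/-- Fractional integration by parts: if `f = I^α_{a+}φ` and `g = I^α_{b-}ψ` with
`φ, ψ ∈ L²[a,b]`, then `∫ₐᵇ (𝒟^α_{a+}f) g = ∫ₐᵇ f (𝒟^α_{b-}g)`, where the
Riemann--Liouville fractional derivatives are
`𝒟^α_{a+}f(x) = Γ(1-α)⁻¹ d/dx ∫ₐˣ f(t)(x-t)^{-α} dt` and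
`𝒟^α_{b-}g(x) = -Γ(1-α)⁻¹ d/dx ∫ₓᵇ g(t)(t-x)^{-α} dt`. -/
theorem fractional_integration_by_parts (a b α : ℝ) (hab : a < b)
    (hα : α ∈ Set.Ioo (0:ℝ) 1)
    (φ ψ f g : ℝ → ℝ)
    (hφ : MemLp φ 2 (volume.restrict (Set.Icc a b)))
    (hψ : MemLp ψ 2 (volume.restrict (Set.Icc a b)))
    (hf : ∀ x, f x = (Real.Gamma α)⁻¹ * ∫ t in a..x, φ t * (x - t) ^ (α - 1))
    (hg : ∀ x, g x = (Real.Gamma α)⁻¹ * ∫ t in x..b, ψ t * (t - x) ^ (α - 1))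
    (Df Dg : ℝ → ℝ)
    (hDf : ∀ x, Df x =
      (Real.Gamma (1 - α))⁻¹ * deriv (fun y => ∫ t in a..y, f t * (y - t) ^ (-α)) x)
    (hDg : ∀ x, Dg x =
      -(Real.Gamma (1 - α))⁻¹ * deriv (fun y => ∫ t in y..b, g t * (t - y) ^ (-α)) x) :
    ∫ x in a..b, Df x * g x = ∫ x in a..b, f x * Dg x := by
  obtain ⟨hα0, hα1⟩ := hα
  obtain rfl : f = fracIntegralLeft α a φ := funext hf
  obtain rfl : g = fracIntegralRight α b ψ := funext hg
  obtain rfl : Df = fracDerivLeft α a (fracIntegralLeft α a φ) := funext hDf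
  obtain rfl : Dg = fracDerivRight α b (fracIntegralRight α b ψ) := funext hDg
  have hIoc : volume.restrict (Ioc a b) ≤ volume.restrict (Icc a b) :=
    Measure.restrict_mono Ioc_subset_Icc_self le_rfl
  replace hφ := hφ.mono_measure hIoc
  replace hψ := hψ.mono_measure hIoc
  have hDφ := fracDerivLeft_fracIntegralLeft_ae_eq hα0 hα1 (hφ.integrable one_le_two)
  have hDψ := fracDerivRight_fracIntegralRight_ae_eq hα0 hα1 (hψ.integrable one_le_two)
  rw [← uIoc_of_le hab.le] at hDφ hDψ
  calc ∫ x in a..b, fracDerivLeft α a (fracIntegralLeft α a φ) x * fracIntegralRight α b ψ x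
      = ∫ x in a..b, φ x * fracIntegralRight α b ψ x :=
        integral_congr_ae_restrict (hDφ.mul .rfl)
    _ = ∫ x in a..b, fracIntegralLeft α a φ x * ψ x :=
        integral_mul_fracIntegralRight hα0 hab.le hφ hψ
    _ = ∫ x in a..b, fracIntegralLeft α a φ x * fracDerivRight α b (fracIntegralRight α b ψ) x :=
        integral_congr_ae_restrict (Filter.EventuallyEq.rfl.mul hDψ.symm)
end
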